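/- arXiv:1908.11467 — 3 statements merged into one kernel-verified Lean document; each statement's English description precedes it below -/
import Mathlib

section
/- Fix N, n ∈ ℕ with n ≤ N, and b ∈ ℝ with b ≠ 0 and b ≠ −1. Define P : ℝ → ℝ by P(x) = Σ_{j=0}^{n} (−1)^j C(n,j) b^(−j) · Π_{i=0}^{j−1} (x − i) · Π_{i=0}^{n−j−1} (N − x − i). Then: (i) P is the evaluation of a real polynomial of degree exactly n; (ii) for every natural number k < n, Σ_{m=0}^{N} P(m) · m^k · b^m / (m! · (N−m)!) = 0. -/
/-!
Expanding the falling factorials at an integer point `m`, the ratios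
`m(m-1)⋯(m-j+1) / m! = 1/(m-j)!` and `(N-m)⋯(N-m-n+j+1) / (N-m)! = 1/(N-m-n+j)!` collapse the
weighted sum, after substituting `m = j + t`, to
`∑_t b^t / (t! (N-n-t)!) · ∑_j (-1)^j C(n,j) (t+j)^k`, and each inner sum is an `n`-th forward
difference of a polynomial of degree `k < n`, hence zero.
The coefficient of `x^n` in `P` is `∑_j (-1)^j C(n,j) b^(-j) (-1)^(n-j) = (-1)^n (1 + b⁻¹)^n`,
which vanishes only for `b = -1`.
-/

open Finset Polynomial
open scoped Nat

theorem sum_range_neg_one_pow_mul_choose_mul_add_pow_eq_zero {R : Type*} [CommRing R]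
    {k n : ℕ} (hk : k < n) (t : R) :
    ∑ j ∈ range (n + 1), (-1 : R) ^ j * n.choose j * (t + j) ^ k = 0 := by
  have h := congrFun (fwdDiff_iter_pow_eq_zero_of_lt (R := R) hk) t
  rw [fwdDiff_iter_eq_sum_shift, Pi.zero_apply] at h
  calc _ = (-1) ^ n * ∑ j ∈ range (n + 1),
        ((-1 : ℤ) ^ (n - j) * n.choose j) • (t + j • (1 : R)) ^ k := by
        rw [mul_sum]
        refine sum_congr rfl fun j hj => ?_
        rw [zsmul_eq_mul, nsmul_one, ← pow_mul_pow_sub (-1 : R) (mem_range_succ_iff.1 hj)]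
        push_cast
        linear_combination -(-1 : R) ^ j * n.choose j * (t + j) ^ k *
          (Even.neg_one_pow ⟨n - j, rfl⟩ : (-1 : R) ^ (n - j + (n - j)) = 1)
    _ = 0 := by rw [h, mul_zero]

section Factorial

variable {K : Type*} [Field K] [CharZero K]

theorem descFactorial_div_factorial {m j : ℕ} (h : j ≤ m) :
    (m.descFactorial j : K) / m ! = ((m - j) ! : K)⁻¹ := by
  have hj : (m.descFactorial j : K) ≠ 0 :=
    Nat.cast_ne_zero.2 (Nat.descFactorial_eq_zero_iff_lt.not.2 (not_lt.2 h))
  rw [← Nat.factorial_mul_descFactorial h, Nat.cast_mul, div_mul_cancel_right₀ hj]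

theorem sum_range_mul_descFactorial_mul_descFactorial_div {N j l : ℕ} (h : j + l ≤ N)
    (f : ℕ → K) :
    ∑ m ∈ range (N + 1), f m * m.descFactorial j * (N - m).descFactorial l / (m ! * (N - m) !) =
      ∑ t ∈ range (N - (j + l) + 1), f (j + t) / (t ! * (N - (j + l) - t) !) := by
  have hsub : Ico j (N - l + 1) ⊆ range (N + 1) := fun m hm => by
    simp only [mem_Ico, mem_range] at hm ⊢; omega
  rw [← sum_subset hsub fun m hmN hm => ?_, sum_Ico_eq_sum_range,
    show N - l + 1 - j = N - (j + l) + 1 by omega]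
  · refine sum_congr rfl fun t ht => ?_
    have ht : t ≤ N - (j + l) := mem_range_succ_iff.1 ht
    rw [mul_assoc, mul_div_assoc, mul_div_mul_comm,
      descFactorial_div_factorial (Nat.le_add_right j t),
      descFactorial_div_factorial (show l ≤ N - (j + t) by omega), Nat.add_sub_cancel_left,
      show N - (j + t) - l = N - (j + l) - t by omega, div_eq_mul_inv, mul_inv]
  · rcases lt_or_ge m j with hmj | hmj
    · simp [Nat.descFactorial_eq_zero_iff_lt.2 hmj]
    · have : N - m < l := by simp only [mem_Ico, mem_range] at hm hmN; omega
      simp [Nat.descFactorial_eq_zero_iff_lt.2 this]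

end Factorial

section Pochhammer

variable {R : Type*} [CommRing R] [IsDomain R]

theorem natDegree_descPochhammer_comp_C_sub_X (l : ℕ) (a : R) :
    ((descPochhammer R l).comp (C a - X)).natDegree = l := by
  rw [natDegree_comp, descPochhammer_natDegree, ← neg_sub, natDegree_neg, natDegree_X_sub_C,
    mul_one]

theorem leadingCoeff_descPochhammer_comp_C_sub_X (l : ℕ) (a : R) :
    ((descPochhammer R l).comp (C a - X)).leadingCoeff = (-1) ^ l := by
  rw [leadingCoeff_comp (by rw [← neg_sub, natDegree_neg, natDegree_X_sub_C]; exact one_ne_zero),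
    (monic_descPochhammer R l).leadingCoeff, descPochhammer_natDegree, ← neg_sub,
    leadingCoeff_neg, leadingCoeff_X_sub_C, one_mul]

theorem natDegree_descPochhammer_mul_comp_C_sub_X_le (i l : ℕ) (a : R) :
    (descPochhammer R i * (descPochhammer R l).comp (C a - X)).natDegree ≤ i + l :=
  natDegree_mul_le_of_le (descPochhammer_natDegree R i).le
    (natDegree_descPochhammer_comp_C_sub_X l a).le

theorem coeff_descPochhammer_mul_comp_C_sub_X (i l : ℕ) (a : R) :
    (descPochhammer R i * (descPochhammer R l).comp (C a - X)).coeff (i + l) = (-1) ^ l := by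
  rw [coeff_mul_add_eq_of_natDegree_le (descPochhammer_natDegree R i).le
    (natDegree_descPochhammer_comp_C_sub_X l a).le]
  have h₁ := (monic_descPochhammer R i).coeff_natDegree
  have h₂ := leadingCoeff_descPochhammer_comp_C_sub_X l a
  rw [descPochhammer_natDegree] at h₁
  rw [leadingCoeff, natDegree_descPochhammer_comp_C_sub_X] at h₂
  rw [h₁, h₂, one_mul]

end Pochhammer

noncomputable def kravchukPoly (N n : ℕ) (b : ℝ) : ℝ[X] :=
  ∑ j ∈ range (n + 1), C ((-1) ^ j * n.choose j * b ^ (-(j : ℤ))) *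
    (descPochhammer ℝ j * (descPochhammer ℝ (n - j)).comp (C (N : ℝ) - X))

section Kravchuk

variable {N n : ℕ} {b : ℝ}

theorem kravchukPoly_eval (x : ℝ) :
    (kravchukPoly N n b).eval x = ∑ j ∈ range (n + 1),
      (-1 : ℝ) ^ j * (n.choose j : ℝ) * b ^ (-(j : ℤ)) *
        (∏ i ∈ range j, (x - (i : ℝ))) * ∏ i ∈ range (n - j), ((N : ℝ) - x - (i : ℝ)) := by
  simp only [kravchukPoly, eval_finsetSum, eval_mul, eval_C, eval_comp, eval_sub, eval_X,
    descPochhammer_eval_eq_prod_range, mul_assoc]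

theorem kravchukPoly_eval_natCast {m : ℕ} (hm : m ≤ N) :
    (kravchukPoly N n b).eval (m : ℝ) = ∑ j ∈ range (n + 1),
      (-1) ^ j * n.choose j * b ^ (-(j : ℤ)) *
        (m.descFactorial j * (N - m).descFactorial (n - j)) := by
  simp only [kravchukPoly, eval_finsetSum, eval_mul, eval_C, eval_comp, eval_sub, eval_X,
    ← Nat.cast_sub hm, descPochhammer_eval_eq_descFactorial]

theorem natDegree_kravchukPoly_le : (kravchukPoly N n b).natDegree ≤ n :=
  natDegree_sum_le_of_forall_le _ _ fun _ hj => (natDegree_C_mul_le _ _).trans <|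
    (natDegree_descPochhammer_mul_comp_C_sub_X_le _ _ _).trans
      (Nat.add_sub_cancel' (mem_range_succ_iff.1 hj)).le

theorem coeff_kravchukPoly : (kravchukPoly N n b).coeff n = (-1) ^ n * (b⁻¹ + 1) ^ n := by
  rw [kravchukPoly, finsetSum_coeff, add_pow, mul_sum]
  refine sum_congr rfl fun j hj => ?_
  have hj : j ≤ n := mem_range_succ_iff.1 hj
  have h := coeff_descPochhammer_mul_comp_C_sub_X j (n - j) (N : ℝ)
  rw [Nat.add_sub_cancel' hj] at h
  rw [coeff_C_mul, h, ← pow_mul_pow_sub (-1 : ℝ) hj, zpow_neg, zpow_natCast, inv_pow]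
  ring

theorem degree_kravchukPoly (hb : b ≠ -1) : (kravchukPoly N n b).degree = n := by
  refine degree_eq_of_le_of_coeff_ne_zero (degree_le_of_natDegree_le natDegree_kravchukPoly_le) ?_
  rw [coeff_kravchukPoly]
  refine mul_ne_zero (pow_ne_zero _ (by norm_num)) (pow_ne_zero _ fun h => hb ?_)
  have hb0 : b ≠ 0 := by rintro rfl; simp at h
  field_simp at h
  linarith

theorem sum_kravchukPoly_eval_mul_pow_weight_eq_zero (hnN : n ≤ N) (hb : b ≠ 0) {k : ℕ}
    (hk : k < n) :
    ∑ m ∈ range (N + 1),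
      (kravchukPoly N n b).eval (m : ℝ) * (m : ℝ) ^ k * b ^ m / (m ! * (N - m) !) = 0 := by
  calc _ = ∑ j ∈ range (n + 1), (-1) ^ j * n.choose j * ∑ m ∈ range (N + 1),
          (m : ℝ) ^ k * b ^ m * b ^ (-(j : ℤ)) * m.descFactorial j *
            (N - m).descFactorial (n - j) / (m ! * (N - m) !) := by
        simp_rw [mul_sum]
        rw [sum_comm]
        refine sum_congr rfl fun m hm => ?_
        rw [kravchukPoly_eval_natCast (mem_range_succ_iff.1 hm), sum_mul, sum_mul, sum_div]
        exact sum_congr rfl fun j _ => by ring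
    _ = ∑ j ∈ range (n + 1), (-1) ^ j * n.choose j * ∑ t ∈ range (N - n + 1),
          ((j + t : ℕ) : ℝ) ^ k * b ^ t / (t ! * (N - n - t) !) := by
        refine sum_congr rfl fun j hj => ?_
        have hj : j + (n - j) = n := Nat.add_sub_cancel' (mem_range_succ_iff.1 hj)
        rw [sum_range_mul_descFactorial_mul_descFactorial_div (hj.trans_le hnN), hj]
        refine congrArg _ (sum_congr rfl fun t _ => ?_)
        rw [pow_add, zpow_neg, zpow_natCast]
        field_simp
    _ = ∑ t ∈ range (N - n + 1), b ^ t / (t ! * (N - n - t) !) *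
          ∑ j ∈ range (n + 1), (-1) ^ j * n.choose j * ((t : ℝ) + j) ^ k := by
        simp_rw [mul_sum]
        rw [sum_comm]
        refine sum_congr rfl fun t _ => sum_congr rfl fun j _ => ?_
        push_cast
        ring
    _ = 0 := sum_eq_zero fun t _ => by
        rw [sum_range_neg_one_pow_mul_choose_mul_add_pow_eq_zero hk, mul_zero]

end Kravchuk

/-- The Kravchuk case of the paper's Proposition: the polynomial
`P(x) = Σ_{j=0}^{n} (−1)^j C(n,j) b^(−j) Π_{i=0}^{j−1}(x−i) Π_{i=0}^{n−j−1}(N−x−i)`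
coming from the discrete Rodrigues formula has degree exactly `n` and is orthogonal to
`x^k`, `k < n`, with respect to the Kravchuk weight `b^m/(m!(N−m)!)` on `{0,…,N}`. -/
theorem stmt_3 (N n : ℕ) (hnN : n ≤ N) (b : ℝ) (hb0 : b ≠ 0) (hb1 : b ≠ -1) (P : ℝ → ℝ)
    (hP : ∀ x : ℝ, P x = ∑ j ∈ Finset.range (n + 1),
      (-1 : ℝ) ^ j * (n.choose j : ℝ) * b ^ (-(j : ℤ)) *
        (∏ i ∈ Finset.range j, (x - (i : ℝ))) *
        ∏ i ∈ Finset.range (n - j), ((N : ℝ) - x - (i : ℝ))) :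
    (∃ p : Polynomial ℝ, p.degree = (n : ℕ) ∧ ∀ x : ℝ, P x = p.eval x) ∧
    (∀ k : ℕ, k < n →
      ∑ m ∈ Finset.range (N + 1),
        P m * (m : ℝ) ^ k * b ^ m / ((m.factorial : ℝ) * ((N - m).factorial : ℝ)) = 0) := by
  obtain rfl : P = fun x => (kravchukPoly N n b).eval x :=
    funext fun x => (hP x).trans (kravchukPoly_eval x).symm
  exact ⟨⟨_, degree_kravchukPoly hb1, fun _ => rfl⟩,
    fun k hk => sum_kravchukPoly_eval_mul_pow_weight_eq_zero hnN hb0 hk⟩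
end

section
/- Fix r ≥ 1, n ∈ ℕ, B ∈ ℝ with B ≠ 0, and real numbers γ_1, …, γ_r such that γ_j − γ_k is not an integer whenever j ≠ k. Define P : ℝ → ℝ by P(x) = Σ_{j=0}^{n} (−1)^j C(n,j) B^(−j) · Π_{k=1}^{r} Π_{i=0}^{j−1} (x − γ_k − i). Then: (i) P is the evaluation of a real polynomial of degree exactly r·n; (ii) for every index l ∈ {1,…,r} and every natural number k < n, the series Σ_{m=0}^{∞} P(γ_l + m) · (γ_l + m)^k · B^m · Π_{k'=1}^{r} (1/Γ(m + γ_l − γ_{k'} + 1)) converges and has sum 0. -/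
/-!
Each term of `P` times the weight `w` is a shifted weight: by `Γ(x + 1) = x Γ(x)`,
`∏_{i<j} (x - γ_k - i) / Γ(x - γ_k + 1) = 1 / Γ(x - γ_k - j + 1)`, so on the lattice `γ_l + ℤ`
the Rodrigues formula `P w = ∇ⁿ w` holds. The factor `1 / Γ(m + 1)` of `w` vanishes at the
negative lattice points, so summation by parts is free of boundary terms and moves `∇ⁿ` onto
`x ↦ xᵏ` as the forward difference `Δⁿ`, which kills polynomials of degree `k < n`. The sums
converge by the ratio test, the ratio of consecutive weights being `O(m⁻ʳ)`. The `j`-th term of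
`P` has degree `r j`, and the top one has the nonzero coefficient `(-1)ⁿ B⁻ⁿ`.
-/

open Finset Filter Topology Polynomial

theorem prod_range_sub_mul_inv_Gamma (x : ℝ) (j : ℕ) :
    (∏ i ∈ range j, (x - i)) * (Real.Gamma (x + 1))⁻¹ = (Real.Gamma (x + 1 - j))⁻¹ := by
  induction j with
  | zero => simp
  | succ j ih =>
    rw [prod_range_succ, mul_right_comm, ih]
    obtain ⟨y, rfl⟩ : ∃ y, x = y + j := ⟨x - j, by ring⟩
    rw [show y + j + 1 - j = y + 1 by ring,
      show y + j + 1 - ((j + 1 : ℕ) : ℝ) = y by push_cast; ring, add_sub_cancel_right]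
    rcases eq_or_ne y 0 with rfl | hy
    · simp [Real.Gamma_zero]
    · rw [Real.Gamma_add_one hy, mul_inv, mul_right_comm, inv_mul_cancel₀ hy, one_mul]

theorem sum_neg_one_pow_mul_choose_mul_add_pow_eq_zero {R : Type*} [CommRing R] {k n : ℕ}
    (hk : k < n) (y : R) :
    ∑ j ∈ range (n + 1), (-1) ^ j * (n.choose j : R) * (y + j) ^ k = 0 := by
  have h := congrFun (fwdDiff_iter_pow_eq_zero_of_lt (R := R) hk) y
  rw [fwdDiff_iter_eq_sum_shift, Pi.zero_apply] at h
  calc _ = (-1) ^ n * ∑ j ∈ range (n + 1),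
        ((-1 : ℤ) ^ (n - j) * n.choose j) • (y + j • (1 : R)) ^ k := by
        rw [mul_sum]
        refine sum_congr rfl fun j hj => ?_
        obtain ⟨i, rfl⟩ := Nat.exists_eq_add_of_le (mem_range_succ_iff.mp hj)
        rw [Nat.add_sub_cancel_left, zsmul_eq_mul, nsmul_one]
        push_cast
        have hsq : ((-1 : R) ^ i) * (-1) ^ i = 1 := by rw [← mul_pow]; norm_num
        linear_combination (-(-1) ^ j * ((j + i).choose j : R) * (y + j) ^ k) * hsq
    _ = 0 := by rw [h, mul_zero]

theorem hasSum_mul_sum_shift_eq_zero {R : Type*} [CommRing R] [TopologicalSpace R]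
    [IsTopologicalRing R] [T2Space R] {w : ℤ → R} (hw : ∀ z < 0, w z = 0) {q c : ℕ → R}
    {t : Finset ℕ} (hq : ∀ j ∈ t, Summable fun s : ℕ => q (s + j) * w s)
    (hqc : ∀ s : ℕ, ∑ j ∈ t, c j * q (s + j) = 0) :
    HasSum (fun m : ℕ => q m * ∑ j ∈ t, c j * w (m - j)) 0 := by
  have hshift : ∀ j ∈ t, HasSum (fun m : ℕ => c j * (q m * w (m - j)))
      (c j * ∑' s : ℕ, q (s + j) * w s) := by
    intro j hj
    have h : HasSum (fun s : ℕ => q (s + j) * w ((s + j : ℕ) - j))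
        (∑' s : ℕ, q (s + j) * w s) := by
      simpa using (hq j hj).hasSum
    rw [hasSum_nat_add_iff (f := fun m : ℕ => q m * w (m - j)), sum_eq_zero fun i hi => by
      rw [hw _ (by simp only [mem_range] at hi; omega), mul_zero], add_zero] at h
    exact h.mul_left (c j)
  have hzero : ∑ j ∈ t, c j * ∑' s : ℕ, q (s + j) * w s = 0 := by
    refine (hasSum_sum fun j hj => (hq j hj).hasSum.mul_left (c j)).unique ?_
    convert hasSum_zero with s
    rw [← zero_mul (w s), ← hqc s, sum_mul]
    exact sum_congr rfl fun j _ => (mul_assoc _ _ _).symm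
  simpa only [hzero, mul_sum, mul_left_comm] using hasSum_sum hshift

theorem summable_of_eventually_eq_smul {𝕜 E : Type*} [NormedField 𝕜] [NormedAddCommGroup E]
    [NormedSpace 𝕜 E] [CompleteSpace E] {f : ℕ → E} {ρ : ℕ → 𝕜}
    (hρ : Tendsto ρ atTop (𝓝 0)) (hf : ∀ᶠ n in atTop, f (n + 1) = ρ n • f n) : Summable f := by
  refine summable_of_ratio_norm_eventually_le (r := 1 / 2) (by norm_num) ?_
  filter_upwards [hf, (tendsto_zero_iff_norm_tendsto_zero.mp hρ).eventually_le_const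
    (by norm_num : (0 : ℝ) < 1 / 2)] with n hn hρn
  rw [hn, norm_smul]
  exact mul_le_mul_of_nonneg_right hρn (norm_nonneg _)

section Weight

variable {ι : Type*} [Fintype ι]

/-- The weight `∏ₖ b_k ^ (x - γₖ) / Γ(x - γₖ + 1)` on the lattice `x = a + z`, divided by the
constant `∏ₖ b_k ^ (a - γₖ)`, with `B = ∏ₖ b_k`. Since `Real.Gamma` vanishes at its poles,
`(Real.Gamma _)⁻¹` is the entire function `1 / Γ`. -/
noncomputable def multiCharlierWeight (B : ℝ) (γ : ι → ℝ) (a : ℝ) (z : ℤ) : ℝ :=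
  B ^ z * ∏ k, (Real.Gamma (a + z - γ k + 1))⁻¹

theorem multiCharlierWeight_eq_zero_of_neg (B : ℝ) (γ : ι → ℝ) (l : ι) {z : ℤ} (hz : z < 0) :
    multiCharlierWeight B γ (γ l) z = 0 := by
  obtain ⟨m, rfl⟩ : ∃ m : ℕ, z = -(m + 1) := ⟨(-z - 1).toNat, by omega⟩
  refine mul_eq_zero_of_right _ (prod_eq_zero (mem_univ l) ?_)
  rw [inv_eq_zero, Real.Gamma_eq_zero_iff]
  exact ⟨m, by push_cast; ring⟩

theorem multiCharlierWeight_natCast (B : ℝ) (γ : ι → ℝ) (a : ℝ) (m : ℕ) :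
    multiCharlierWeight B γ a m = B ^ m * ∏ k, 1 / Real.Gamma (m + a - γ k + 1) := by
  simp only [multiCharlierWeight, zpow_natCast, Int.cast_natCast, one_div, add_comm (m : ℝ)]

theorem multiCharlierWeight_natCast_succ (B : ℝ) (γ : ι → ℝ) (a : ℝ) (s : ℕ)
    (hs : ∀ k, a + s - γ k + 1 ≠ 0) :
    multiCharlierWeight B γ a (s + 1 : ℕ) =
      (B * ∏ k, (a + s - γ k + 1)⁻¹) * multiCharlierWeight B γ a s := by
  have hΓ : ∀ k, Real.Gamma (a + ((s + 1 : ℕ) : ℤ) - γ k + 1) =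
      (a + s - γ k + 1) * Real.Gamma (a + (s : ℤ) - γ k + 1) := fun k => by
    push_cast
    rw [← Real.Gamma_add_one (hs k)]
    ring_nf
  simp only [multiCharlierWeight, zpow_natCast, hΓ, mul_inv, prod_mul_distrib, pow_succ]
  ring

theorem multiCharlierWeight_natCast_sub {B : ℝ} (hB : B ≠ 0) (γ : ι → ℝ) (a : ℝ) (m j : ℕ) :
    multiCharlierWeight B γ a (m - j) =
      B ^ (-(j : ℤ)) * (∏ k, ∏ i ∈ range j, (a + m - γ k - i)) * multiCharlierWeight B γ a m := by
  have hΓ : ∀ k, (∏ i ∈ range j, (a + m - γ k - i)) * (Real.Gamma (a + (m : ℤ) - γ k + 1))⁻¹ =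
      (Real.Gamma (a + ((m - j : ℤ) : ℝ) - γ k + 1))⁻¹ := fun k => by
    rw [Int.cast_natCast, prod_range_sub_mul_inv_Gamma]
    push_cast
    ring_nf
  simp only [multiCharlierWeight, zpow_sub₀ hB, zpow_neg, zpow_natCast, div_eq_mul_inv]
  rw [← prod_congr rfl fun k _ => hΓ k, prod_mul_distrib]
  ring

theorem summable_pow_mul_multiCharlierWeight [Nonempty ι] (B : ℝ) (γ : ι → ℝ) (a x : ℝ) (k : ℕ) :
    Summable fun s : ℕ => (x + s) ^ k * multiCharlierWeight B γ a s := by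
  have hlin : ∀ c : ℝ, Tendsto (fun s : ℕ => c + s) atTop atTop := fun c =>
    tendsto_atTop_add_const_left _ c tendsto_natCast_atTop_atTop
  have hlin' : ∀ i, Tendsto (fun s : ℕ => a + s - γ i + 1) atTop atTop := fun i =>
    (hlin (a - γ i + 1)).congr fun s => by ring
  refine summable_of_eventually_eq_smul (ρ := fun s : ℕ =>
    ((x + 1 + s) / (x + s)) ^ k * (B * ∏ i, (a + s - γ i + 1)⁻¹)) ?_ ?_
  · have hquot : Tendsto (fun s : ℕ => (x + 1 + s) / (x + s)) atTop (𝓝 1) := by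
      simpa using tendsto_add_mul_div_add_mul_atTop_nhds (x + 1) x (1 : ℝ) one_ne_zero
    have hprod : Tendsto (fun s : ℕ => ∏ i, (a + s - γ i + 1)⁻¹) atTop (𝓝 0) := by
      simpa [zero_pow Fintype.card_ne_zero] using
        tendsto_finsetProd univ fun i _ => tendsto_inv_atTop_zero.comp (hlin' i)
    simpa using (hquot.pow k).mul (hprod.const_mul B)
  · have hne : ∀ᶠ s : ℕ in atTop, x + s ≠ 0 ∧ ∀ i, a + s - γ i + 1 ≠ 0 :=
      ((hlin x).eventually_ne_atTop 0).and
        (eventually_all.2 fun i => (hlin' i).eventually_ne_atTop 0)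
    filter_upwards [hne] with s ⟨hx, hs⟩
    have hshift : x + ((s + 1 : ℕ) : ℝ) = (x + 1 + s) / (x + s) * (x + s) := by
      rw [div_mul_cancel₀ _ hx]
      push_cast
      ring
    rw [multiCharlierWeight_natCast_succ B γ a s hs, smul_eq_mul, hshift, mul_pow]
    ring

end Weight

section RodriguesDegree

variable {R : Type*} [CommRing R] {ι : Type*} [Fintype ι]

theorem monic_prod_prod_X_sub_C (γ : ι → R) (j : ℕ) :
    (∏ k, ∏ i ∈ range j, (X - C (γ k + i))).Monic :=
  monic_prod_of_monic _ _ fun _ _ => monic_prod_of_monic _ _ fun _ _ => monic_X_sub_C _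

theorem natDegree_prod_prod_X_sub_C [Nontrivial R] (γ : ι → R) (j : ℕ) :
    (∏ k, ∏ i ∈ range j, (X - C (γ k + i))).natDegree = Fintype.card ι * j := by
  rw [natDegree_prod_of_monic _ _ fun k _ => monic_prod_of_monic _ _ fun i _ => monic_X_sub_C _]
  simp [natDegree_prod_of_monic, monic_X_sub_C, -map_add, -map_natCast]

theorem degree_sum_range_smul_of_monic [Nontrivial R] {Q : ℕ → R[X]} {c : ℕ → R} {d n : ℕ}
    (hd : 0 < d) (hQ : ∀ j, (Q j).Monic) (hdeg : ∀ j, (Q j).natDegree = d * j) (hc : c n ≠ 0) :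
    (∑ j ∈ range (n + 1), c j • Q j).degree = (d * n : ℕ) := by
  have hdegQ : ∀ j, (Q j).degree = (d * j : ℕ) := fun j => by
    rw [degree_eq_natDegree (hQ j).ne_zero, hdeg]
  have htop : (c n • Q n).degree = (d * n : ℕ) := by
    rw [degree_smul_of_isRightRegular_leadingCoeff hc
      (by rw [(hQ n).leadingCoeff]; exact isRegular_one.right), hdegQ]
  rw [sum_range_succ, degree_add_eq_right_of_degree_lt] <;> rw [htop]
  refine (degree_sum_le _ _).trans_lt
    ((Finset.sup_lt_iff (WithBot.bot_lt_coe _)).2 fun j hj => ?_)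
  calc (c j • Q j).degree ≤ (d * j : ℕ) := hdegQ j ▸ degree_smul_le _ _
    _ < (d * n : ℕ) := by exact_mod_cast Nat.mul_lt_mul_of_pos_left (mem_range.1 hj) hd

end RodriguesDegree

theorem stmt_5_general (r : ℕ) (hr : 1 ≤ r) (n : ℕ) (B : ℝ) (hB : B ≠ 0) (γ : Fin r → ℝ)
    (P : ℝ → ℝ)
    (hP : ∀ x : ℝ, P x = ∑ j ∈ Finset.range (n + 1),
      (-1 : ℝ) ^ j * (n.choose j : ℝ) * B ^ (-(j : ℤ)) *
        ∏ k : Fin r, ∏ i ∈ Finset.range j, (x - γ k - (i : ℝ))) :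
    (∃ p : Polynomial ℝ, p.degree = (r * n : ℕ) ∧ ∀ x : ℝ, P x = p.eval x) ∧
    (∀ l : Fin r, ∀ k : ℕ, k < n →
      HasSum (fun m : ℕ =>
        P (γ l + m) * (γ l + m) ^ k * B ^ m *
          ∏ k' : Fin r, (1 / Real.Gamma ((m : ℝ) + γ l - γ k' + 1))) 0) := by
  refine ⟨⟨∑ j ∈ range (n + 1), ((-1 : ℝ) ^ j * n.choose j * B ^ (-(j : ℤ))) •
    ∏ k, ∏ i ∈ range j, (X - C (γ k + i)), ?_, fun x => ?_⟩, fun l k hk => ?_⟩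
  · simpa using degree_sum_range_smul_of_monic hr (monic_prod_prod_X_sub_C γ)
      (by simpa using natDegree_prod_prod_X_sub_C γ) (by simp [hB])
  · simp [hP, eval_finsetSum, eval_prod, sub_add_eq_sub_sub]
  · have : Nonempty (Fin r) := ⟨l⟩
    have hrodrigues : ∀ m : ℕ, P (γ l + m) * multiCharlierWeight B γ (γ l) m =
        ∑ j ∈ range (n + 1), (-1) ^ j * n.choose j * multiCharlierWeight B γ (γ l) (m - j) := by
      intro m
      rw [hP, sum_mul]
      refine sum_congr rfl fun j _ => ?_
      rw [multiCharlierWeight_natCast_sub hB]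
      ring
    have hsum := hasSum_mul_sum_shift_eq_zero
      (fun _ hz => multiCharlierWeight_eq_zero_of_neg B γ l hz)
      (q := fun m => (γ l + m) ^ k) (c := fun j => (-1) ^ j * n.choose j) (t := range (n + 1))
      (fun j _ => (summable_pow_mul_multiCharlierWeight B γ (γ l) (γ l + j) k).congr fun s => by
        push_cast; ring_nf)
      (fun s => by
        simpa [add_assoc] using sum_neg_one_pow_mul_choose_mul_add_pow_eq_zero hk (γ l + s))
    refine hsum.congr_fun fun m => ?_
    rw [← hrodrigues, multiCharlierWeight_natCast]
    ring

/-- The paper's main Theorem specialized to a product of `r` Charlier weights on shifted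
lattices `γ_k + ℤ₊`: the Rodrigues polynomial
`P(x) = Σ_{j=0}^{n} (−1)^j C(n,j) B^(−j) Π_{k=1}^{r} Π_{i=0}^{j−1} (x − γ_k − i)`
has degree exactly `r·n` and satisfies the multiple orthogonality relations. -/
theorem stmt_5 (r : ℕ) (hr : 1 ≤ r) (n : ℕ) (B : ℝ) (hB : B ≠ 0) (γ : Fin r → ℝ)
    (hγ : ∀ j k : Fin r, j ≠ k → ∀ z : ℤ, γ j - γ k ≠ (z : ℝ)) (P : ℝ → ℝ)
    (hP : ∀ x : ℝ, P x = ∑ j ∈ Finset.range (n + 1),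
      (-1 : ℝ) ^ j * (n.choose j : ℝ) * B ^ (-(j : ℤ)) *
        ∏ k : Fin r, ∏ i ∈ Finset.range j, (x - γ k - (i : ℝ))) :
    (∃ p : Polynomial ℝ, p.degree = (r * n : ℕ) ∧ ∀ x : ℝ, P x = p.eval x) ∧
    (∀ l : Fin r, ∀ k : ℕ, k < n →
      HasSum (fun m : ℕ =>
        P (γ l + m) * (γ l + m) ^ k * B ^ m *
          ∏ k' : Fin r, (1 / Real.Gamma ((m : ℝ) + γ l - γ k' + 1))) 0) :=
  stmt_5_general r hr n B hB γ P hP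
end

section
/- Fix b > 0 with b ≠ 1, natural numbers N_1, N_2, n with n ≤ N_1, and γ_1, γ_2 ∈ ℝ such that either (N_1 = N_2 and 0 < |γ_1 − γ_2| < 1) or (N_2 = N_1 + 1 and 0 < γ_1 − γ_2 < 1). For j ∈ {1,2} let j' denote the other index and define W_j(m) = b^m / (m! · (N_j − m)! · Γ(m + γ_j − γ_{j'} + 1) · Γ(N_{j'} − m − γ_j + γ_{j'} + 1)) for 0 ≤ m ≤ N_j, and define P : ℝ → ℝ by P(x) = Σ_{j=0}^{n} (−1)^j C(n,j) b^(−j) · Π_{i=0}^{j−1} [(x − γ_1 − i)(x − γ_2 − i)] · Π_{i=0}^{n−j−1} [(N_1 − x + γ_1 − i)(N_2 − x + γ_2 − i)]. Then: (i) W_j(m) > 0 for all j ∈ {1,2} and 0 ≤ m ≤ N_j; (ii) P is the evaluation of a real polynomial of degree exactly 2n; (iii) for every j ∈ {1,2} and every natural number k < n, Σ_{m=0}^{N_j} P(γ_j + m) · (γ_j + m)^k · W_j(m) = 0. -/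
/-!
With `R x = b ^ x / (Γ(x - γ₁ + 1) Γ(N₁ - x + γ₁ + 1) Γ(x - γ₂ + 1) Γ(N₂ - x + γ₂ + 1))` one has
`W_j m = b ^ (-γ_j) * R (γ_j + m)`. Since `1 / Γ(z - j + 1) = z (z - 1) ⋯ (z - j + 1) / Γ(z + 1)`
for every real `z`, the `j`-th term of `P x * R x` is `(-1) ^ j * C(n, j) * R_n (x - j)`, where
`R_n` has `N₁ - n`, `N₂ - n` in place of `N₁`, `N₂`: this is the Rodrigues formula
`P R = ∇ⁿ R_n`. As `R_n (γ₁ + s)` vanishes for integers `s` outside `[0, N₁ - n]`, summation by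
parts moves `∇ⁿ` onto the polynomial `(γ₁ + m) ^ k`, whose `n`-th difference vanishes for
`k < n`; `P` is symmetric in the two lattices, which gives the second family. Each term of `P` is
`(-1) ^ j * C(n, j) * b ^ (-j)` times a monic polynomial of degree `2n`, so the leading
coefficient of `P` is `(1 - 1 / b) ^ n ≠ 0`.
-/

open Finset Polynomial Real

lemma Real.inv_Gamma_eq_self_mul_inv_Gamma_add_one (s : ℝ) :
    (Gamma s)⁻¹ = s * (Gamma (s + 1))⁻¹ := by
  rcases ne_or_eq s 0 with h | rfl
  · rw [Gamma_add_one h, mul_inv, mul_inv_cancel_left₀ h]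
  · rw [zero_add, Gamma_zero, inv_zero, zero_mul]

lemma Real.inv_Gamma_sub_nat_add_one (z : ℝ) (j : ℕ) :
    (Gamma (z - j + 1))⁻¹ = (∏ i ∈ range j, (z - i)) * (Gamma (z + 1))⁻¹ := by
  induction j with
  | zero => simp
  | succ j ih =>
    have h := inv_Gamma_eq_self_mul_inv_Gamma_add_one (z - (j + 1 : ℕ) + 1)
    rw [show z - (j + 1 : ℕ) + 1 + 1 = z - j + 1 by push_cast; ring, ih] at h
    rw [h, prod_range_succ]
    push_cast
    ring

lemma Real.Gamma_intCast_of_nonpos {s : ℤ} (hs : s ≤ 0) : Gamma s = 0 :=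
  (Gamma_eq_zero_iff _).2 ⟨s.natAbs, by rw [Nat.cast_natAbs]; push_cast [abs_of_nonpos hs]; ring⟩

lemma sum_range_alternating_choose_mul_eval_eq_zero {R : Type*} [CommRing R] {q : R[X]} {n : ℕ}
    (hq : q.natDegree < n) (x : R) :
    ∑ j ∈ range (n + 1), (-1) ^ j * (n.choose j : R) * q.eval (x + j) = 0 := by
  have h := congrFun (fwdDiff_iter_eq_zero_of_degree_lt hq) x
  rw [fwdDiff_iter_eq_sum_shift] at h
  calc _ = (-1) ^ n * ∑ j ∈ range (n + 1),
        ((-1 : ℤ) ^ (n - j) * n.choose j) • q.eval (x + j • 1) := by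
        rw [mul_sum]
        refine sum_congr rfl fun j hj => ?_
        have hjn : j ≤ n := Nat.lt_succ_iff.mp (mem_range.mp hj)
        rw [zsmul_eq_mul, nsmul_one]
        push_cast
        rw [← mul_assoc, ← mul_assoc, ← pow_add, show n + (n - j) = j + 2 * (n - j) by omega,
          pow_add, pow_mul, neg_one_sq, one_pow, mul_one]
    _ = 0 := by rw [h, Pi.zero_apply, mul_zero]

lemma sum_range_mul_comp_sub_eq {R : Type*} [CommRing R] {L n j : ℕ} (hj : j ≤ n) (f : ℕ → R)
    {F : ℤ → R} (hF : ∀ s : ℤ, s < 0 ∨ (L : ℤ) < s → F s = 0) :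
    ∑ m ∈ range (L + n + 1), f m * F (m - j) = ∑ s ∈ range (L + 1), f (s + j) * F s := by
  symm
  calc ∑ s ∈ range (L + 1), f (s + j) * F s
      = ∑ m ∈ (range (L + 1)).map (addRightEmbedding j), f m * F (m - j) := by simp
    _ = _ := by
      refine sum_subset (fun m hm => ?_) fun m _ hm => ?_
      · obtain ⟨s, hs, rfl⟩ := mem_map.mp hm
        rw [mem_range] at hs ⊢
        rw [addRightEmbedding_apply]
        omega
      · simp only [mem_map, mem_range, addRightEmbedding_apply, not_exists, not_and] at hm
        rw [hF _ (by by_contra! h; exact hm (m - j) (by omega) (by omega)), mul_zero]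

lemma sum_mul_sum_alternating_choose_eq_zero {R : Type*} [CommRing R] {L n : ℕ} {F : ℤ → R}
    (hF : ∀ s : ℤ, s < 0 ∨ (L : ℤ) < s → F s = 0) {q : R[X]} (hq : q.natDegree < n) :
    ∑ m ∈ range (L + n + 1),
      q.eval (m : R) * ∑ j ∈ range (n + 1), (-1) ^ j * (n.choose j : R) * F (m - j) = 0 := by
  calc _ = ∑ j ∈ range (n + 1), (-1) ^ j * (n.choose j : R) *
        ∑ m ∈ range (L + n + 1), q.eval (m : R) * F (m - j) := by
        simp_rw [mul_sum]
        rw [sum_comm]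
        exact sum_congr rfl fun j _ => sum_congr rfl fun m _ => by ring
    _ = ∑ j ∈ range (n + 1), (-1) ^ j * (n.choose j : R) *
        ∑ s ∈ range (L + 1), q.eval ((s + j : ℕ) : R) * F s :=
        sum_congr rfl fun j hj => by
          rw [sum_range_mul_comp_sub_eq (Nat.lt_succ_iff.mp (mem_range.mp hj)) _ hF]
    _ = ∑ s ∈ range (L + 1),
        F s * ∑ j ∈ range (n + 1), (-1) ^ j * (n.choose j : R) * q.eval ((s : R) + j) := by
        simp_rw [mul_sum]
        rw [sum_comm]
        exact sum_congr rfl fun s _ => sum_congr rfl fun j _ => by push_cast; ring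
    _ = 0 := sum_eq_zero fun s _ => by
        rw [sum_range_alternating_choose_mul_eval_eq_zero hq, mul_zero]

/-- Mathlib's `Γ` is `0` at its poles, so `(Gamma ·)⁻¹` is the entire reciprocal Gamma function:
this weight is defined for all `x` and vanishes at `γ + s` for integers `s ∉ [0, N]`. -/
noncomputable def binomialWeight (N γ x : ℝ) : ℝ :=
  (Gamma (x - γ + 1))⁻¹ * (Gamma (N - x + γ + 1))⁻¹

noncomputable def kravchukWeight (b N₁ γ₁ N₂ γ₂ x : ℝ) : ℝ :=
  b ^ x * binomialWeight N₁ γ₁ x * binomialWeight N₂ γ₂ x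

noncomputable def kravchukRodrigues (b N₁ γ₁ N₂ γ₂ : ℝ) (n : ℕ) (x : ℝ) : ℝ :=
  ∑ j ∈ range (n + 1), (-1 : ℝ) ^ j * (n.choose j : ℝ) * b ^ (-(j : ℤ)) *
    (∏ i ∈ range j, ((x - γ₁ - i) * (x - γ₂ - i))) *
    ∏ i ∈ range (n - j), ((N₁ - x + γ₁ - i) * (N₂ - x + γ₂ - i))

noncomputable def latticeWeight (b : ℝ) (N₁ : ℕ) (γ₁ N₂ γ₂ : ℝ) (m : ℕ) : ℝ :=
  b ^ m / ((m.factorial : ℝ) * ((N₁ - m).factorial : ℝ) *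
    Gamma ((m : ℝ) + γ₁ - γ₂ + 1) * Gamma (N₂ - m - γ₁ + γ₂ + 1))

lemma prod_mul_prod_mul_binomialWeight (N γ x : ℝ) {j n : ℕ} (hj : j ≤ n) :
    (∏ i ∈ range j, (x - γ - i)) * (∏ i ∈ range (n - j), (N - x + γ - i)) *
      binomialWeight N γ x = binomialWeight (N - n) γ (x - j) := by
  have h₁ := inv_Gamma_sub_nat_add_one (x - γ) j
  have h₂ := inv_Gamma_sub_nat_add_one (N - x + γ) (n - j)
  rw [Nat.cast_sub hj] at h₂
  rw [binomialWeight, binomialWeight, show x - j - γ + 1 = x - γ - j + 1 by ring, h₁,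
    show N - n - (x - j) + γ + 1 = N - x + γ - (n - j) + 1 by ring, h₂]
  ring

lemma binomialWeight_eq_zero {N : ℕ} {s : ℤ} (hs : s < 0 ∨ (N : ℤ) < s) (γ : ℝ) :
    binomialWeight N γ (γ + s) = 0 := by
  rw [binomialWeight]
  rcases hs with hs | hs
  · rw [show γ + s - γ + 1 = ((s + 1 : ℤ) : ℝ) by push_cast; ring,
      Gamma_intCast_of_nonpos (by omega), inv_zero, zero_mul]
  · rw [show (N : ℝ) - (γ + s) + γ + 1 = ((N - s + 1 : ℤ) : ℝ) by push_cast; ring,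
      Gamma_intCast_of_nonpos (by omega), inv_zero, mul_zero]

lemma kravchukRodrigues_comm (b N₁ γ₁ N₂ γ₂ : ℝ) (n : ℕ) :
    kravchukRodrigues b N₁ γ₁ N₂ γ₂ n = kravchukRodrigues b N₂ γ₂ N₁ γ₁ n := by
  funext x
  simp only [kravchukRodrigues, mul_comm (x - γ₁ - _), mul_comm (N₁ - x + γ₁ - _)]

theorem kravchukRodrigues_mul_kravchukWeight {b : ℝ} (hb : 0 < b) (N₁ γ₁ N₂ γ₂ : ℝ) (n : ℕ)
    (x : ℝ) :
    kravchukRodrigues b N₁ γ₁ N₂ γ₂ n x * kravchukWeight b N₁ γ₁ N₂ γ₂ x =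
      ∑ j ∈ range (n + 1), (-1) ^ j * (n.choose j : ℝ) *
        kravchukWeight b (N₁ - n) γ₁ (N₂ - n) γ₂ (x - j) := by
  rw [kravchukRodrigues, sum_mul]
  refine sum_congr rfl fun j hj => ?_
  have hjn : j ≤ n := Nat.lt_succ_iff.mp (mem_range.mp hj)
  rw [kravchukWeight, kravchukWeight, ← prod_mul_prod_mul_binomialWeight N₁ γ₁ x hjn,
    ← prod_mul_prod_mul_binomialWeight N₂ γ₂ x hjn, rpow_sub hb, rpow_natCast, zpow_neg,
    zpow_natCast]
  simp only [prod_mul_distrib]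
  ring

theorem sum_kravchukRodrigues_mul_eval_mul_kravchukWeight {b : ℝ} (hb : 0 < b) {N₁ n : ℕ}
    (hn : n ≤ N₁) (γ₁ N₂ γ₂ : ℝ) {q : ℝ[X]} (hq : q.natDegree < n) :
    ∑ m ∈ range (N₁ + 1), kravchukRodrigues b N₁ γ₁ N₂ γ₂ n (γ₁ + m) * q.eval (γ₁ + m) *
      kravchukWeight b N₁ γ₁ N₂ γ₂ (γ₁ + m) = 0 := by
  obtain ⟨L, rfl⟩ := Nat.exists_eq_add_of_le' hn
  have hF (s : ℤ) (hs : s < 0 ∨ (L : ℤ) < s) :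
      kravchukWeight b ((L + n : ℕ) - n) γ₁ (N₂ - n) γ₂ (γ₁ + s) = 0 := by
    rw [kravchukWeight, Nat.cast_add, add_sub_cancel_right, binomialWeight_eq_zero hs,
      mul_zero, zero_mul]
  have hq' : (q.comp (X + C γ₁)).natDegree < n := by
    rwa [natDegree_comp, natDegree_X_add_C, mul_one]
  rw [← sum_mul_sum_alternating_choose_eq_zero hF hq']
  refine sum_congr rfl fun m _ => ?_
  rw [mul_right_comm, kravchukRodrigues_mul_kravchukWeight hb, eval_comp, mul_comm]
  simp [add_comm (m : ℝ), add_sub_assoc]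

lemma latticeWeight_eq_rpow_neg_mul_kravchukWeight {b : ℝ} (hb : 0 < b) {N₁ m : ℕ}
    (hm : m ≤ N₁) (γ₁ N₂ γ₂ : ℝ) :
    latticeWeight b N₁ γ₁ N₂ γ₂ m = b ^ (-γ₁) * kravchukWeight b N₁ γ₁ N₂ γ₂ (γ₁ + m) := by
  rw [latticeWeight, kravchukWeight, binomialWeight, binomialWeight,
    show γ₁ + m - γ₁ + 1 = (m : ℝ) + 1 by ring,
    show (N₁ : ℝ) - (γ₁ + m) + γ₁ + 1 = ((N₁ - m : ℕ) : ℝ) + 1 by push_cast [hm]; ring,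
    Gamma_nat_eq_factorial, Gamma_nat_eq_factorial, rpow_add hb, rpow_natCast, rpow_neg hb.le,
    show γ₁ + m - γ₂ + 1 = (m : ℝ) + γ₁ - γ₂ + 1 by ring,
    show N₂ - (γ₁ + m) + γ₂ + 1 = N₂ - m - γ₁ + γ₂ + 1 by ring]
  have : b ^ γ₁ ≠ 0 := (rpow_pos_of_pos hb γ₁).ne'
  field_simp

lemma latticeWeight_pos {b : ℝ} (hb : 0 < b) {N₁ m : ℕ} (hm : m ≤ N₁) {γ₁ N₂ γ₂ : ℝ}
    (hlo : -1 < γ₁ - γ₂) (hhi : γ₁ - γ₂ < N₂ - N₁ + 1) : 0 < latticeWeight b N₁ γ₁ N₂ γ₂ m := by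
  have : (m : ℝ) ≤ N₁ := by exact_mod_cast hm
  exact div_pos (pow_pos hb m) <| mul_pos (mul_pos (by positivity)
    (Gamma_pos_of_pos (by linarith))) (Gamma_pos_of_pos (by linarith))

lemma Polynomial.degree_sum_C_mul_of_monic {R ι : Type*} [Semiring R] {s : Finset ι} {c : ι → R}
    {q : ι → R[X]} {d : ℕ} (hq : ∀ i ∈ s, (q i).Monic ∧ (q i).natDegree = d)
    (hc : ∑ i ∈ s, c i ≠ 0) : (∑ i ∈ s, C (c i) * q i).degree = d := by
  refine degree_eq_of_le_of_coeff_ne_zero (degree_le_of_natDegree_le ?_) ?_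
  · exact natDegree_sum_le_of_forall_le _ _ fun i hi =>
      natDegree_C_mul_le _ _ |>.trans (hq i hi).2.le
  · rwa [finsetSum_coeff, sum_congr rfl fun i hi => by
      rw [coeff_C_mul, ← (hq i hi).2, (hq i hi).1.coeff_natDegree, mul_one]]

lemma Polynomial.monic_prod_X_sub_C_mul_X_sub_C {R ι : Type*} [CommRing R] [Nontrivial R]
    (s : Finset ι) (a c : ι → R) :
    (∏ i ∈ s, (X - C (a i)) * (X - C (c i))).Monic ∧
      (∏ i ∈ s, (X - C (a i)) * (X - C (c i))).natDegree = 2 * #s := by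
  have h : ∀ i ∈ s, ((X - C (a i)) * (X - C (c i))).Monic := fun i _ =>
    (monic_X_sub_C _).mul (monic_X_sub_C _)
  refine ⟨monic_prod_of_monic _ _ h, ?_⟩
  rw [natDegree_prod_of_monic _ _ h, sum_congr rfl fun i _ =>
    (monic_X_sub_C (a i)).natDegree_mul (monic_X_sub_C (c i))]
  simp [mul_comm]

theorem exists_degree_eq_kravchukRodrigues_eq_eval {b : ℝ} (hb : b ≠ 1) (N₁ γ₁ N₂ γ₂ : ℝ)
    (n : ℕ) : ∃ p : ℝ[X], p.degree = (2 * n : ℕ) ∧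
      ∀ x, kravchukRodrigues b N₁ γ₁ N₂ γ₂ n x = p.eval x := by
  refine ⟨∑ j ∈ range (n + 1), C ((-1) ^ j * (n.choose j : ℝ) * b ^ (-(j : ℤ))) *
      ((∏ i ∈ range j, (X - C (γ₁ + i)) * (X - C (γ₂ + i))) *
        ∏ i ∈ range (n - j), (X - C (N₁ + γ₁ - i)) * (X - C (N₂ + γ₂ - i))), ?_, fun x => ?_⟩
  · refine degree_sum_C_mul_of_monic (fun j hj => ?_) ?_
    · obtain ⟨h₁, d₁⟩ := monic_prod_X_sub_C_mul_X_sub_C (range j) (γ₁ + ·) (γ₂ + ·)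
      obtain ⟨h₂, d₂⟩ := monic_prod_X_sub_C_mul_X_sub_C (range (n - j))
        (fun i : ℕ => N₁ + γ₁ - i) (fun i : ℕ => N₂ + γ₂ - i)
      refine ⟨h₁.mul h₂, ?_⟩
      rw [h₁.natDegree_mul h₂, d₁, d₂, card_range, card_range]
      have := mem_range.mp hj
      omega
    · have hsum : ∑ j ∈ range (n + 1), (-1) ^ j * (n.choose j : ℝ) * b ^ (-(j : ℤ)) =
          (1 - b⁻¹) ^ n := by
        rw [sub_eq_neg_add, add_pow]
        exact sum_congr rfl fun j _ => by
          rw [zpow_neg, zpow_natCast, neg_pow b⁻¹, inv_pow, one_pow]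
          ring
      rw [hsum]
      exact pow_ne_zero _ (sub_ne_zero.2 fun h => hb (inv_eq_one.1 h.symm))
  · simp only [kravchukRodrigues, eval_finsetSum, eval_mul, eval_C, eval_prod, eval_sub,
      eval_X]
    exact sum_congr rfl fun j _ => by
      rw [mul_assoc]
      congr 2 <;> exact prod_congr rfl fun i _ => by ring

theorem sum_kravchukRodrigues_mul_pow_mul_latticeWeight {b : ℝ} (hb : 0 < b) {N₁ n : ℕ}
    (hn : n ≤ N₁) (γ₁ N₂ γ₂ : ℝ) {k : ℕ} (hk : k < n) :
    ∑ m ∈ range (N₁ + 1), kravchukRodrigues b N₁ γ₁ N₂ γ₂ n (γ₁ + m) * (γ₁ + m) ^ k *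
      latticeWeight b N₁ γ₁ N₂ γ₂ m = 0 := by
  have h := sum_kravchukRodrigues_mul_eval_mul_kravchukWeight hb hn γ₁ N₂ γ₂
    (q := X ^ k) (by rwa [natDegree_X_pow])
  rw [← mul_zero (b ^ (-γ₁)), ← h, mul_sum]
  refine sum_congr rfl fun m hm => ?_
  rw [latticeWeight_eq_rpow_neg_mul_kravchukWeight hb (Nat.lt_succ_iff.mp (mem_range.mp hm)),
    eval_X_pow]
  ring

/-- The paper's Kravchuk–Kravchuk family: the weights `W_j` on the interlacing shifted
lattices `γ_j + {0,…,N_j}` are positive, the Rodrigues polynomial `P` has degree exactly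
`2n` (Condition MD2 is `b ≠ 1`), and `P` is orthogonal to `x^k`, `k < n`, with respect
to both discrete measures. -/
theorem stmt_11 (b : ℝ) (hb0 : 0 < b) (hb1 : b ≠ 1) (N₁ N₂ n : ℕ) (hnN : n ≤ N₁)
    (γ₁ γ₂ : ℝ)
    (hlat : (N₁ = N₂ ∧ 0 < |γ₁ - γ₂| ∧ |γ₁ - γ₂| < 1) ∨
            (N₂ = N₁ + 1 ∧ 0 < γ₁ - γ₂ ∧ γ₁ - γ₂ < 1))
    (W₁ W₂ : ℕ → ℝ)
    (hW₁ : ∀ m : ℕ, m ≤ N₁ → W₁ m = b ^ m /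
      ((m.factorial : ℝ) * ((N₁ - m).factorial : ℝ) *
        Real.Gamma ((m : ℝ) + γ₁ - γ₂ + 1) * Real.Gamma ((N₂ : ℝ) - m - γ₁ + γ₂ + 1)))
    (hW₂ : ∀ m : ℕ, m ≤ N₂ → W₂ m = b ^ m /
      ((m.factorial : ℝ) * ((N₂ - m).factorial : ℝ) *
        Real.Gamma ((m : ℝ) + γ₂ - γ₁ + 1) * Real.Gamma ((N₁ : ℝ) - m - γ₂ + γ₁ + 1)))
    (P : ℝ → ℝ)
    (hP : ∀ x : ℝ, P x = ∑ j ∈ Finset.range (n + 1),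
      (-1 : ℝ) ^ j * (n.choose j : ℝ) * b ^ (-(j : ℤ)) *
        (∏ i ∈ Finset.range j, ((x - γ₁ - (i : ℝ)) * (x - γ₂ - (i : ℝ)))) *
        ∏ i ∈ Finset.range (n - j),
          (((N₁ : ℝ) - x + γ₁ - (i : ℝ)) * ((N₂ : ℝ) - x + γ₂ - (i : ℝ)))) :
    (∀ m : ℕ, (m ≤ N₁ → 0 < W₁ m) ∧ (m ≤ N₂ → 0 < W₂ m)) ∧
    (∃ p : Polynomial ℝ, p.degree = (2 * n : ℕ) ∧ ∀ x : ℝ, P x = p.eval x) ∧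
    (∀ k : ℕ, k < n →
      ∑ m ∈ Finset.range (N₁ + 1), P (γ₁ + m) * (γ₁ + m) ^ k * W₁ m = 0 ∧
      ∑ m ∈ Finset.range (N₂ + 1), P (γ₂ + m) * (γ₂ + m) ^ k * W₂ m = 0) := by
  have hPdef : P = kravchukRodrigues b N₁ γ₁ N₂ γ₂ n := funext hP
  have hn₂ : n ≤ N₂ := by rcases hlat with ⟨rfl, -⟩ | ⟨rfl, -⟩ <;> omega
  have hγ : (-1 < γ₁ - γ₂ ∧ γ₁ - γ₂ < N₂ - N₁ + 1) ∧
      (-1 < γ₂ - γ₁ ∧ γ₂ - γ₁ < N₁ - N₂ + 1) := by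
    rcases hlat with ⟨rfl, -, h⟩ | ⟨rfl, h₀, h₁⟩
    · have := abs_lt.mp h
      constructor <;> constructor <;> linarith
    · push_cast
      constructor <;> constructor <;> linarith
  refine ⟨fun m => ⟨fun hm => ?_, fun hm => ?_⟩,
    hPdef ▸ exists_degree_eq_kravchukRodrigues_eq_eval hb1 _ _ _ _ n, fun k hk => ⟨?_, ?_⟩⟩
  · exact hW₁ m hm ▸ latticeWeight_pos hb0 hm hγ.1.1 hγ.1.2
  · exact hW₂ m hm ▸ latticeWeight_pos hb0 hm hγ.2.1 hγ.2.2
  · rw [← sum_kravchukRodrigues_mul_pow_mul_latticeWeight hb0 hnN γ₁ N₂ γ₂ hk, hPdef]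
    exact sum_congr rfl fun m hm => by
      rw [hW₁ m (Nat.lt_succ_iff.mp (mem_range.mp hm)), latticeWeight]
  · rw [← sum_kravchukRodrigues_mul_pow_mul_latticeWeight hb0 hn₂ γ₂ N₁ γ₁ hk, hPdef,
      kravchukRodrigues_comm]
    exact sum_congr rfl fun m hm => by
      rw [hW₂ m (Nat.lt_succ_iff.mp (mem_range.mp hm)), latticeWeight]
end
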